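/- Let Y : ℝ³ → ℝ³ be Lebesgue measurable with ‖Y‖_{L³ʷ(ℝ³)} < ∞ and such that ‖𝟙_{B(0,r)}·Y‖_{L³ʷ(ℝ³)} → 0 as r → 0⁺. Then for every continuous, compactly supported ζ : ℝ³ → ℝ³, one has λ · ∫_{ℝ³} Y(λx)·ζ(x) dx → 0 as λ → 0⁺ (the integrand is absolutely integrable for each λ > 0, and the limit of the scalar quantity is 0). -/

import Mathlib

/-!
Substituting `y = λx`, `λ ∫ Y(λx)·ζ(x) dx = λ^{1-d} ∫ Y(y)·ζ(y/λ) dy`, and only the ball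
`B(0, λR) ⊇ λ · supp ζ` contributes. On a set of measure `V`, a function of weak-`Lᵖ` norm `W`
has `L¹` norm at most `p/(p-1) · V^{1-1/p} · W`: in the layer-cake formula the level sets are
bounded by `V` at low heights and by `Wᵖ t⁻ᵖ` at large ones. For `p = d` and `V ∼ (λR)ᵈ` the
powers of `λ` cancel exactly, so `λ |∫ Y(λx)·ζ(x) dx| ≲ ‖ζ‖_∞ R^{d-1} ‖𝟙_{B(0,λR)} Y‖_{Lᵈʷ}`,
which tends to `0` by hypothesis.
-/

open MeasureTheory ENNReal Filter

noncomputable section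

/-- Points of `ℝ³` with the Euclidean norm. -/
abbrev E3 := EuclideanSpace ℝ (Fin 3)

/-- The weak-`L³` (Lorentz `L^{3,∞}`) quasinorm of a vector field `g : ℝ³ → ℝ³` with
respect to Lebesgue measure:
`‖g‖_{L³ʷ} = sup_{t>0} t · |{x : |g(x)| > t}|^{1/3}`. -/
def weakL3 (g : E3 → E3) : ℝ≥0∞ :=
  ⨆ (t : ℝ) (_ : 0 < t),
    ENNReal.ofReal t * (volume {x : E3 | t < ‖g x‖}) ^ ((1 : ℝ) / 3)

open Set Function Metric Module Topology

def weakLpNorm {α E : Type*} [MeasurableSpace α] [Norm E] (μ : Measure α) (p : ℝ) (f : α → E) :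
    ℝ≥0∞ :=
  ⨆ (t : ℝ) (_ : 0 < t), ENNReal.ofReal t * μ {x | t < ‖f x‖} ^ (1 / p)

theorem weakL3_eq_weakLpNorm (g : E3 → E3) : weakL3 g = weakLpNorm volume 3 g := rfl

theorem lintegral_Ioi_rpow_neg {p s : ℝ} (hp : 1 < p) (hs : 0 < s) :
    ∫⁻ t in Ioi s, ENNReal.ofReal (t ^ (-p)) = ENNReal.ofReal (s ^ (1 - p) / (p - 1)) := by
  rw [← ofReal_integral_eq_lintegral_ofReal (integrableOn_Ioi_rpow_of_lt (by linarith) hs)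
    (ae_restrict_of_forall_mem measurableSet_Ioi fun t ht => by positivity [hs.trans ht]),
    integral_Ioi_rpow_of_lt (by linarith) hs, neg_add_eq_sub, ← neg_div_neg_eq, neg_neg, neg_sub]

section WeakLp

variable {α E : Type*} [MeasurableSpace α] [NormedAddCommGroup E] {μ : Measure α} {p : ℝ}
  {f : α → E}

theorem le_weakLpNorm {t : ℝ} (ht : 0 < t) :
    ENNReal.ofReal t * μ {x | t < ‖f x‖} ^ (1 / p) ≤ weakLpNorm μ p f :=
  le_iSup₂ (f := fun t (_ : 0 < t) => ENNReal.ofReal t * μ {x | t < ‖f x‖} ^ (1 / p)) t ht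

theorem weakLpNorm_mono {F : Type*} [NormedAddCommGroup F] {g : α → F} (hp : 0 ≤ p)
    (hfg : ∀ x, ‖f x‖ ≤ ‖g x‖) : weakLpNorm μ p f ≤ weakLpNorm μ p g :=
  iSup₂_mono fun _ _ => by gcongr; exact hfg _

theorem meas_lt_norm_le_weakLpNorm (hp : 0 < p) {t : ℝ} (ht : 0 < t) :
    μ {x | t < ‖f x‖} ≤ weakLpNorm μ p f ^ p * ENNReal.ofReal (t ^ (-p)) := by
  set D := μ {x | t < ‖f x‖}
  have hroot : D ^ (1 / p) ≤ weakLpNorm μ p f / ENNReal.ofReal t :=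
    ENNReal.le_div_iff_mul_le (by simp [ht]) (by simp) |>.2 <| mul_comm (D ^ (1 / p)) _ ▸
      le_weakLpNorm ht
  calc D = (D ^ (1 / p)) ^ p := by
        rw [← ENNReal.rpow_mul, one_div_mul_cancel hp.ne', ENNReal.rpow_one]
    _ ≤ (weakLpNorm μ p f / ENNReal.ofReal t) ^ p := by gcongr
    _ = weakLpNorm μ p f ^ p * ENNReal.ofReal (t ^ (-p)) := by
      rw [ENNReal.div_rpow_of_nonneg _ _ hp.le, div_eq_mul_inv, ENNReal.ofReal_rpow_of_pos ht,
        ← ENNReal.ofReal_inv_of_pos (by positivity), Real.rpow_neg ht.le]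

variable [MeasurableSpace E] [OpensMeasurableSpace E]

theorem lintegral_enorm_eq_lintegral_meas_lt (hf : AEMeasurable f μ) :
    ∫⁻ x, ‖f x‖ₑ ∂μ = ∫⁻ t in Ioi 0, μ {x | t < ‖f x‖} := by
  simp_rw [← ofReal_norm]
  exact lintegral_eq_lintegral_meas_lt μ (ae_of_all _ fun _ => norm_nonneg _) hf.norm

theorem lintegral_enorm_le_add_weakLpNorm (hp : 1 < p) (hf : AEMeasurable f μ) {s : ℝ}
    (hs : 0 < s) :
    ∫⁻ x, ‖f x‖ₑ ∂μ ≤ ENNReal.ofReal s * μ (support f)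
      + weakLpNorm μ p f ^ p * ENNReal.ofReal (s ^ (1 - p) / (p - 1)) := by
  rw [lintegral_enorm_eq_lintegral_meas_lt hf, ← Ioc_union_Ioi_eq_Ioi hs.le]
  refine (lintegral_union_le _ _ _).trans (add_le_add ?_ ?_)
  · calc ∫⁻ t in Ioc 0 s, μ {x | t < ‖f x‖} ≤ ∫⁻ _ in Ioc 0 s, μ (support f) :=
          setLIntegral_mono measurable_const fun t ht => measure_mono fun x hx =>
            norm_pos_iff.1 (ht.1.trans hx)
      _ = ENNReal.ofReal s * μ (support f) := by
          rw [setLIntegral_const, Real.volume_Ioc, sub_zero, mul_comm]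
  · calc ∫⁻ t in Ioi s, μ {x | t < ‖f x‖}
        ≤ ∫⁻ t in Ioi s, weakLpNorm μ p f ^ p * ENNReal.ofReal (t ^ (-p)) :=
          setLIntegral_mono (by fun_prop) fun t ht =>
            meas_lt_norm_le_weakLpNorm (by linarith) (hs.trans ht)
      _ = weakLpNorm μ p f ^ p * ENNReal.ofReal (s ^ (1 - p) / (p - 1)) := by
          rw [lintegral_const_mul _ (by fun_prop), lintegral_Ioi_rpow_neg hp hs]

theorem lintegral_enorm_le_weakLpNorm (hp : 1 < p) (hf : AEMeasurable f μ) {V : ℝ≥0∞}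
    (hV : μ (support f) ≤ V) (hVt : V ≠ ⊤) (hWt : weakLpNorm μ p f ≠ ⊤) :
    ∫⁻ x, ‖f x‖ₑ ∂μ ≤ ENNReal.ofReal (p / (p - 1)) * V ^ (1 - 1 / p) * weakLpNorm μ p f := by
  by_cases hdeg : V = 0 ∨ weakLpNorm μ p f = 0
  · have hD : ∀ t ∈ Ioi (0 : ℝ), μ {x | t < ‖f x‖} = 0 := fun t ht => by
      rcases hdeg with hV0 | hW0
      · exact measure_mono_null (fun x hx => norm_pos_iff.1 (ht.trans hx))
          (le_zero_iff.1 (hV0 ▸ hV))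
      · refine le_zero_iff.1 <| (meas_lt_norm_le_weakLpNorm (by linarith) ht).trans_eq ?_
        rw [hW0, ENNReal.zero_rpow_of_pos (by linarith), zero_mul]
    rw [lintegral_enorm_eq_lintegral_meas_lt hf, setLIntegral_congr_fun measurableSet_Ioi hD,
      lintegral_zero]
    exact zero_le
  push Not at hdeg
  obtain ⟨hV0, hW0⟩ := hdeg
  set v := V.toReal
  set w := (weakLpNorm μ p f).toReal
  have hv : 0 < v := ENNReal.toReal_pos hV0 hVt
  have hw : 0 < w := ENNReal.toReal_pos hW0 hWt
  -- the height at which the two bounds on the level sets, `V` and `Wᵖ t⁻ᵖ`, cross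
  set s := w / v ^ (1 / p) with hs_def
  have hs : 0 < s := by positivity
  have hsp : s ^ p = w ^ p / v := by
    rw [Real.div_rpow hw.le (by positivity), ← Real.rpow_mul hv.le,
      one_div_mul_cancel (by linarith), Real.rpow_one]
  have hbalance : s * v + w ^ p * (s ^ (1 - p) / (p - 1)) = p / (p - 1) * v ^ (1 - 1 / p) * w := by
    have : p - 1 ≠ 0 := by linarith
    rw [Real.rpow_sub hs, Real.rpow_one, hsp, Real.rpow_sub hv, Real.rpow_one, hs_def]
    field_simp
    ring
  calc ∫⁻ x, ‖f x‖ₑ ∂μ ≤ ENNReal.ofReal s * V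
        + weakLpNorm μ p f ^ p * ENNReal.ofReal (s ^ (1 - p) / (p - 1)) :=
        (lintegral_enorm_le_add_weakLpNorm hp hf hs).trans (by gcongr)
    _ = _ := by
      rw [← ENNReal.ofReal_toReal hVt, ← ENNReal.ofReal_toReal hWt, ENNReal.ofReal_rpow_of_pos hv,
        ENNReal.ofReal_rpow_of_pos hw, ← ENNReal.ofReal_mul hs.le,
        ← ENNReal.ofReal_mul (by positivity), ← ENNReal.ofReal_add (by positivity) (by positivity),
        ← ENNReal.ofReal_mul (by positivity), ← ENNReal.ofReal_mul (by positivity), hbalance]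

theorem setLIntegral_enorm_le_weakLpNorm (hp : 1 < p) (hf : AEMeasurable f μ) {s : Set α}
    (hs : MeasurableSet s) (hμs : μ s ≠ ⊤) (hW : weakLpNorm μ p (s.indicator f) ≠ ⊤) :
    ∫⁻ x in s, ‖f x‖ₑ ∂μ ≤
      ENNReal.ofReal (p / (p - 1)) * μ s ^ (1 - 1 / p) * weakLpNorm μ p (s.indicator f) := by
  rw [← lintegral_indicator hs]
  simp_rw [← enorm_indicator_eq_indicator_enorm]
  exact lintegral_enorm_le_weakLpNorm hp (hf.indicator hs) (measure_mono support_indicator_subset)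
    hμs hW

end WeakLp

section Rescaling

variable {F G : Type*} [NormedAddCommGroup F] [NormedSpace ℝ F] [FiniteDimensional ℝ F]
  [MeasurableSpace F] [BorelSpace F] (μ : Measure F) [μ.IsAddHaarMeasure]

theorem lintegral_comp_smul {g : F → ℝ≥0∞} (hg : Measurable g) {r : ℝ} (hr : r ≠ 0) :
    ∫⁻ x, g (r • x) ∂μ = ENNReal.ofReal |(r ^ finrank ℝ F)⁻¹| * ∫⁻ x, g x ∂μ := by
  rw [← lintegral_map hg (measurable_const_smul r), Measure.map_addHaar_smul μ hr,
    lintegral_smul_measure, smul_eq_mul]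

variable [NormedAddCommGroup G] [InnerProductSpace ℝ G] [MeasurableSpace G] [BorelSpace G]
  {Y ζ : F → G} {M R lam : ℝ}

theorem lintegral_enorm_inner_comp_smul_le (hY : Measurable Y) (hM : ∀ x, ‖ζ x‖ ≤ M)
    (hζR : support ζ ⊆ ball 0 R) (hlam : 0 < lam) :
    ∫⁻ x, ‖inner ℝ (Y (lam • x)) (ζ x)‖ₑ ∂μ ≤
      ENNReal.ofReal (lam ^ finrank ℝ F)⁻¹ *
        (ENNReal.ofReal M * ∫⁻ y in ball 0 (lam * R), ‖Y y‖ₑ ∂μ) := by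
  have hpt : ∀ x, ‖inner ℝ (Y (lam • x)) (ζ x)‖ₑ ≤
      (ball 0 (lam * R)).indicator (fun y => ENNReal.ofReal M * ‖Y y‖ₑ) (lam • x) := by
    intro x
    by_cases hx : ζ x = 0
    · simp [hx]
    have hx' : lam • x ∈ ball (0 : F) (lam * R) := by
      have := hζR hx
      rw [mem_ball_zero_iff] at this ⊢
      rw [norm_smul, Real.norm_of_nonneg hlam.le]
      gcongr
    rw [indicator_of_mem hx', ← ofReal_norm, ← ofReal_norm,
      ← ENNReal.ofReal_mul ((norm_nonneg _).trans (hM x))]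
    gcongr
    calc ‖inner ℝ (Y (lam • x)) (ζ x)‖ ≤ ‖Y (lam • x)‖ * ‖ζ x‖ := norm_inner_le_norm _ _
      _ ≤ M * ‖Y (lam • x)‖ := by rw [mul_comm]; gcongr; exact hM x
  calc _ ≤ _ := lintegral_mono hpt
    _ = _ := by
      rw [lintegral_comp_smul μ ((by fun_prop : Measurable fun y => ENNReal.ofReal M * ‖Y y‖ₑ)
        |>.indicator measurableSet_ball) hlam.ne', lintegral_indicator measurableSet_ball,
        lintegral_const_mul _ (by fun_prop), abs_of_pos (by positivity)]

theorem ofReal_mul_lintegral_enorm_inner_comp_smul_le (hd : 1 < finrank ℝ F) (hY : Measurable Y)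
    (hM : ∀ x, ‖ζ x‖ ≤ M) (hR : 0 < R) (hζR : support ζ ⊆ ball 0 R) (hlam : 0 < lam)
    (hW : weakLpNorm μ (finrank ℝ F) ((ball 0 (lam * R)).indicator Y) ≠ ⊤) :
    ENNReal.ofReal lam * ∫⁻ x, ‖inner ℝ (Y (lam • x)) (ζ x)‖ₑ ∂μ ≤
      ENNReal.ofReal (finrank ℝ F / (finrank ℝ F - 1) * M * R ^ ((finrank ℝ F : ℝ) - 1)) *
        μ (ball 0 1) ^ (1 - 1 / (finrank ℝ F : ℝ)) *
        weakLpNorm μ (finrank ℝ F) ((ball 0 (lam * R)).indicator Y) := by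
  set n := finrank ℝ F
  set W := weakLpNorm μ n ((ball 0 (lam * R)).indicator Y)
  have : Nontrivial F := nontrivial_of_finrank_pos (R := ℝ) (by omega)
  have hn : (1 : ℝ) < n := by exact_mod_cast hd
  have hexp : 0 ≤ 1 - 1 / (n : ℝ) := by
    rw [sub_nonneg, div_le_one (by linarith)]
    exact hn.le
  have hM0 : 0 ≤ M := (norm_nonneg _).trans (hM 0)
  have hρ : 0 < lam * R := mul_pos hlam hR
  have hball := setLIntegral_enorm_le_weakLpNorm hn hY.aemeasurable measurableSet_ball
    (measure_ball_lt_top (μ := μ) (x := 0) (r := lam * R)).ne hW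
  rw [Measure.addHaar_ball μ 0 hρ.le] at hball
  have hscale : lam * ((lam ^ n)⁻¹ * (M * (n / (n - 1) * ((lam * R) ^ n) ^ (1 - 1 / (n : ℝ))))) =
      n / (n - 1) * M * R ^ ((n : ℝ) - 1) := by
    rw [← Real.rpow_natCast (lam * R), ← Real.rpow_mul hρ.le, mul_one_sub,
      mul_one_div_cancel (by positivity), Real.mul_rpow hlam.le hR.le, Real.rpow_sub_one hlam.ne',
      Real.rpow_natCast]
    field_simp
  calc ENNReal.ofReal lam * ∫⁻ x, ‖inner ℝ (Y (lam • x)) (ζ x)‖ₑ ∂μ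
      ≤ ENNReal.ofReal lam * (ENNReal.ofReal (lam ^ n)⁻¹ * (ENNReal.ofReal M *
          (ENNReal.ofReal (n / (n - 1)) *
            (ENNReal.ofReal ((lam * R) ^ n) * μ (ball 0 1)) ^ (1 - 1 / (n : ℝ)) * W))) := by
        gcongr
        exact (lintegral_enorm_inner_comp_smul_le μ hY hM hζR hlam).trans (by gcongr)
    _ = _ := by
      rw [ENNReal.mul_rpow_of_nonneg _ _ hexp, ENNReal.ofReal_rpow_of_nonneg (by positivity) hexp,
        ← hscale, ENNReal.ofReal_mul hlam.le, ENNReal.ofReal_mul (by positivity),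
        ENNReal.ofReal_mul hM0, ENNReal.ofReal_mul (by positivity)]
      ring

end Rescaling

theorem tendsto_mul_integral_of_ofReal_mul_lintegral_le {α : Type*} [MeasurableSpace α]
    {μ : Measure α} {f : ℝ → α → ℝ} {g : ℝ → ℝ≥0∞}
    (hfg : ∀ lam, 0 < lam → ENNReal.ofReal lam * ∫⁻ x, ‖f lam x‖ₑ ∂μ ≤ g lam)
    (hg : Tendsto g (𝓝[>] 0) (𝓝 0)) :
    Tendsto (fun lam => lam * ∫ x, f lam x ∂μ) (𝓝[>] 0) (𝓝 0) := by
  rw [tendsto_zero_iff_enorm_tendsto_zero]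
  refine tendsto_of_tendsto_of_tendsto_of_le_of_le' tendsto_const_nhds hg
    (Eventually.of_forall fun _ => zero_le) ?_
  filter_upwards [self_mem_nhdsWithin] with lam (hlam : 0 < lam)
  calc ‖lam * ∫ x, f lam x ∂μ‖ₑ = ENNReal.ofReal lam * ‖∫ x, f lam x ∂μ‖ₑ := by
        rw [enorm_mul, Real.enorm_of_nonneg hlam.le]
    _ ≤ ENNReal.ofReal lam * ∫⁻ x, ‖f lam x‖ₑ ∂μ := by
        gcongr
        exact enorm_integral_le_lintegral_enorm _
    _ ≤ g lam := hfg lam hlam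

theorem weakL3_indicator_le (s : Set E3) (g : E3 → E3) : weakL3 (s.indicator g) ≤ weakL3 g :=
  weakLpNorm_mono (by norm_num) fun _ => norm_indicator_le_norm_self _ _

theorem exists_ofReal_mul_lintegral_enorm_inner_comp_smul_le {Y ζ : E3 → E3} {M R : ℝ}
    (hY : Measurable Y) (hfin : weakL3 Y ≠ ⊤) (hM : ∀ x, ‖ζ x‖ ≤ M) (hR : 0 < R)
    (hζR : support ζ ⊆ ball 0 R) :
    ∃ C ≠ ⊤, ∀ lam, 0 < lam → ENNReal.ofReal lam * ∫⁻ x, ‖inner ℝ (Y (lam • x)) (ζ x)‖ₑ ≤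
      C * weakL3 ((ball 0 (lam * R)).indicator Y) := by
  have hweak : ∀ g : E3 → E3, weakL3 g = weakLpNorm volume (finrank ℝ E3) g := by
    simp [weakL3_eq_weakLpNorm]
  refine ⟨?C, ?finite, fun lam hlam => ?bound⟩
  case bound =>
    simpa only [hweak] using ofReal_mul_lintegral_enorm_inner_comp_smul_le volume (by simp) hY hM
      hR hζR hlam (hweak _ ▸ ((weakL3_indicator_le _ _).trans_lt hfin.lt_top).ne)
  case finite =>
    exact ENNReal.mul_ne_top ENNReal.ofReal_ne_top
      (ENNReal.rpow_ne_top_of_nonneg (by simp; norm_num) measure_ball_lt_top.ne)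

/-- **Critical rescalings of functions in the class `𝕃` vanish distributionally.**
If `Y ∈ L³ʷ(ℝ³)` and `‖𝟙_{B(0,r)} Y‖_{L³ʷ} → 0` as `r → 0⁺`, then for every continuous,
compactly supported `ζ : ℝ³ → ℝ³`, the integrand `Y(λx)·ζ(x)` is absolutely integrable for
each `λ > 0` and `λ ∫_{ℝ³} Y(λx)·ζ(x) dx → 0` as `λ → 0⁺`. -/
theorem rescaled_L_class_tendsto_zero (Y : E3 → E3) (hY : Measurable Y)
    (hfin : weakL3 Y < ⊤)
    (hsmall : Tendsto (fun r : ℝ => weakL3 ((Metric.ball (0 : E3) r).indicator Y))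
      (nhdsWithin 0 (Set.Ioi 0)) (nhds 0)) :
    ∀ ζ : E3 → E3, Continuous ζ → HasCompactSupport ζ →
      (∀ lam : ℝ, 0 < lam →
        Integrable (fun x : E3 => (inner ℝ (Y (lam • x)) (ζ x) : ℝ)) volume) ∧
      Tendsto (fun lam : ℝ => lam * ∫ x : E3, (inner ℝ (Y (lam • x)) (ζ x) : ℝ))
        (nhdsWithin 0 (Set.Ioi 0)) (nhds 0) := by
  intro ζ hζc hζs
  obtain ⟨M, hM⟩ := hζs.exists_bound_of_continuous hζc
  obtain ⟨R, hR, hζR⟩ := hζs.isBounded.subset_ball_lt 0 0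
  obtain ⟨C, hC, hbound⟩ := exists_ofReal_mul_lintegral_enorm_inner_comp_smul_le hY hfin.ne hM hR
    ((subset_tsupport ζ).trans hζR)
  refine ⟨fun lam hlam => ⟨((hY.comp (measurable_const_smul lam)).inner
    hζc.measurable).aestronglyMeasurable, ?_⟩,
    tendsto_mul_integral_of_ofReal_mul_lintegral_le hbound ?_⟩
  · refine ENNReal.lt_top_of_mul_ne_top_right ?_ (ENNReal.ofReal_pos.2 hlam).ne'
    exact ((hbound lam hlam).trans_lt (ENNReal.mul_lt_top hC.lt_top
      ((weakL3_indicator_le _ _).trans_lt hfin))).ne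
  · have hscale : Tendsto (· * R) (𝓝[>] 0) (𝓝[>] 0) := by
      simpa using TendstoNhdsWithinIoi.mul_const hR (tendsto_id (x := 𝓝[>] (0 : ℝ)))
    simpa using ENNReal.Tendsto.const_mul (hsmall.comp hscale) (Or.inr hC)
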